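/- arXiv:1905.11281 — 3 statements merged into one kernel-verified Lean document; each statement's English description precedes it below -/
import Mathlib

section
/- Let w be a Lyndon word of length at least 2 with right standard factorization w = uv (v the longest proper suffix of w that is Lyndon), and let a be a Lyndon word of length at least 2 that is a proper factor of w but not a prefix of w. Then a is a proper factor of u or a factor of v. -/
/-- A Lyndon word: a nonempty word strictly lexicographically smaller than
all of its proper cyclic rotations. -/
def IsLyndon {X : Type*} [LinearOrder X] (w : List X) : Prop :=
  w ≠ [] ∧ ∀ a b : List X, a ≠ [] → b ≠ [] → w = a ++ b →
    List.Lex (· < ·) w (b ++ a)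

section aux
variable {X : Type*} [LinearOrder X]

lemma lex_append_left_of_not_prefix : ∀ {x y : List X},
    List.Lex (· < ·) x y → ¬ x <+: y → ∀ z, List.Lex (· < ·) (x ++ z) y := by
  intro x y h
  induction h with
  | nil => intro hnp; exact absurd (List.nil_prefix) hnp
  | rel hab => intro _ z; exact List.Lex.rel hab
  | cons h ih =>
      intro hnp z
      refine List.Lex.cons (ih (fun hp => hnp ?_) z)
      exact (List.cons_prefix_cons).2 ⟨rfl, hp⟩

lemma lex_or_prefix_of_lex_append (z : List X) : ∀ (y x : List X),
    List.Lex (· < ·) x (y ++ z) → List.Lex (· < ·) x y ∨ y <+: x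
  | [], x, _ => Or.inr (List.nil_prefix)
  | _ :: _, [], _ => Or.inl List.Lex.nil
  | b :: y', a :: x', h => by
      rcases h with _ | h | h
      · exact Or.inl (List.Lex.rel h)
      · rcases lex_or_prefix_of_lex_append z y' x' (by assumption) with h | h
        · exact Or.inl (List.Lex.cons h)
        · exact Or.inr ((List.cons_prefix_cons).2 ⟨rfl, h⟩)

lemma lex_of_lex_append_left : ∀ (s : List X) {x y : List X},
    List.Lex (· < ·) (s ++ x) (s ++ y) → List.Lex (· < ·) x y
  | [], _, _, h => h
  | c :: s', x, y, h => by
      rw [List.cons_append, List.cons_append, List.cons_lex_cons_iff] at h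
      exact lex_of_lex_append_left s' (h.resolve_left (lt_irrefl c)).2

lemma lex_asymm {x y : List X} (h1 : List.Lex (· < ·) x y)
    (h2 : List.Lex (· < ·) y x) : False :=
  lt_asymm (α := List X) h1 h2

/-- A Lyndon word is lexicographically smaller than each of its proper nonempty
suffixes. -/
lemma IsLyndon.lex_suffix {w p s : List X} (hw : IsLyndon w)
    (hsplit : w = p ++ s) (hp : p ≠ []) (hs : s ≠ []) : List.Lex (· < ·) w s := by
  rcases lex_or_prefix_of_lex_append p s w (hw.2 p s hp hs hsplit) with h | hpref
  · exact h
  · exfalso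
    obtain ⟨x, hx⟩ := hpref
    have hlen : s.length + x.length = p.length + s.length := by
      have := congrArg List.length (hx.trans hsplit)
      simpa using this
    have hxp_len : x.length = p.length := by omega
    have hxne : x ≠ [] := by
      intro h
      subst h
      simp at hxp_len
      exact hp (List.length_eq_zero_iff.mp hxp_len.symm)
    have rot2 : List.Lex (· < ·) (p ++ s) (x ++ s) := by
      have := hw.2 s x hs hxne hx.symm
      rwa [hsplit] at this
    have hxp : List.Lex (· < ·) x p := by
      have h1 : List.Lex (· < ·) (s ++ x) (s ++ p) := by
        have := hw.2 p s hp hs hsplit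
        rwa [← hx] at this
      exact lex_of_lex_append_left s h1
    have hnp : ¬ x <+: p := by
      intro hpx
      have : x = p := hpx.eq_of_length hxp_len
      subst this
      exact lex_asymm hxp hxp
    have : List.Lex (· < ·) (x ++ s) p := lex_append_left_of_not_prefix hxp hnp s
    exact lex_asymm rot2 (List.Lex.append_right _ s this)

lemma isLyndon_of_lex_suffix {w : List X} (hne : w ≠ [])
    (h : ∀ p s, w = p ++ s → p ≠ [] → s ≠ [] → List.Lex (· < ·) w s) :
    IsLyndon w :=
  ⟨hne, fun a b ha hb hab => List.Lex.append_right _ a (h a b hab ha hb)⟩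

/-- The longest proper Lyndon suffix of a Lyndon word is its lexicographically
smallest proper nonempty suffix. -/
lemma min_suffix {w u v : List X}
    (hfac : w = u ++ v) (hu : u ≠ []) (hvL : IsLyndon v)
    (hmax : ∀ v' : List X, v' <:+ w → v' ≠ w → IsLyndon v' → v'.length ≤ v.length) :
    ∀ s', s' <:+ w → s' ≠ [] → s' ≠ w → s' = v ∨ List.Lex (· < ·) v s' := by
  classical
  set T : List (List X) := w.tails.filter (fun s => s ≠ [] ∧ s ≠ w) with hT
  have hmemT : ∀ s : List X, s ∈ T ↔ s <:+ w ∧ s ≠ [] ∧ s ≠ w := by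
    intro s
    simp [hT, List.mem_filter, List.mem_tails]
  have hvne : v ≠ w := by
    intro h
    have := congrArg List.length (h ▸ hfac)
    simp at this
    exact hu this
  have hvT : v ∈ T := (hmemT v).2 ⟨⟨u, hfac.symm⟩, hvL.1, hvne⟩
  have hTpos : 0 < T.length := List.length_pos_iff.2 (fun h => by simp [h] at hvT)
  set m := T.minimum_of_length_pos hTpos with hm
  have hmT : m ∈ T := List.minimum_of_length_pos_mem hTpos
  have hmle : ∀ s ∈ T, m ≤ s := fun s hs =>
    List.minimum_of_length_pos_le_of_mem hs hTpos
  obtain ⟨hmsuf, hmne, hmnw⟩ := (hmemT m).1 hmT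
  -- m is Lyndon
  have hmLyn : IsLyndon m := by
    refine isLyndon_of_lex_suffix hmne ?_
    intro p s hsplit hp hs
    have hslen : s.length < m.length := by
      have := congrArg List.length hsplit
      simp at this
      have : p.length ≠ 0 := fun h => hp (List.length_eq_zero_iff.mp h)
      omega
    have hmwlen : m.length ≤ w.length := hmsuf.length_le
    have hssuf : s <:+ w := (show s <:+ m from ⟨p, hsplit.symm⟩).trans hmsuf
    have hsnw : s ≠ w := by
      intro h
      subst h
      omega
    have hsT : s ∈ T := (hmemT s).2 ⟨hssuf, hs, hsnw⟩
    have hle : m ≤ s := hmle s hsT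
    have hne : m ≠ s := by
      intro h
      subst h
      omega
    have : m < s := lt_of_le_of_ne hle hne
    exact this
  -- m = v
  have hmv : m = v := by
    have hlen : m.length ≤ v.length := hmax m hmsuf hmnw hmLyn
    rcases List.suffix_or_suffix_of_suffix hmsuf ⟨u, hfac.symm⟩ with h | h
    · by_contra hne
      obtain ⟨p, hp⟩ := h
      have hpne : p ≠ [] := by
        intro hh
        subst hh
        exact hne (by simpa using hp)
      have h1 : List.Lex (· < ·) v m := hvL.lex_suffix hp.symm hpne hmne
      have h2 : m ≤ v := hmle v hvT
      rcases lt_or_eq_of_le h2 with h2 | h2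
      · exact lex_asymm h2 h1
      · exact hne h2
    · exact (h.eq_of_length (le_antisymm h.length_le hlen)).symm
  intro s' hsuf hsne hsnw
  have hsT : s' ∈ T := (hmemT s').2 ⟨hsuf, hsne, hsnw⟩
  have := hmle s' hsT
  rw [hmv] at this
  rcases lt_or_eq_of_le this with h | h
  · exact Or.inr h
  · exact Or.inl h.symm

end aux

theorem stmt8 {X : Type*} [LinearOrder X] (w u v a : List X)
    (hw : IsLyndon w) (hwlen : 2 ≤ w.length)
    (hfac : w = u ++ v) (hu : u ≠ []) (hvL : IsLyndon v)
    (hmax : ∀ v' : List X, v' <:+ w → v' ≠ w → IsLyndon v' → v'.length ≤ v.length)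
    (haL : IsLyndon a) (halen : 2 ≤ a.length)
    (hainf : a <:+: w) (hane : a ≠ w) (hnpref : ¬ a <+: w) :
    (a <:+: u ∧ a ≠ u) ∨ a <:+: v := by
  obtain ⟨s, t, hst⟩ := hainf
  have hsne : s ≠ [] := by
    intro h
    subst h
    exact hnpref ⟨t, by simpa using hst⟩
  have hupre : u <+: w := ⟨v, hfac.symm⟩
  have hsapre : s ++ a <+: w := ⟨t, by simpa using hst⟩
  rcases le_or_gt (s.length + a.length) u.length with hcase | hcase
  · -- a inside u
    left
    have hsau : s ++ a <+: u := List.prefix_of_prefix_length_le hsapre hupre (by simpa using hcase)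
    obtain ⟨r, hr⟩ := hsau
    constructor
    · exact ⟨s, r, by simpa using hr⟩
    · intro h
      subst h
      exact hnpref hupre
  rcases le_or_gt u.length s.length with hcase2 | hcase2
  · -- a inside v
    right
    have hspre : s <+: w := (List.prefix_append s a).trans hsapre
    have husp : u <+: s := List.prefix_of_prefix_length_le hupre hspre hcase2
    obtain ⟨s', hs'⟩ := husp
    have h0 : u ++ (s' ++ (a ++ t)) = u ++ v := by
      rw [← List.append_assoc, ← List.append_assoc, hs', hst]
      exact hfac
    have h1 := List.append_cancel_left h0
    exact ⟨s', t, by simpa [List.append_assoc] using h1⟩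
  -- straddle case
  right
  have hspre : s <+: w := (List.prefix_append s a).trans hsapre
  have hsu : s <+: u := List.prefix_of_prefix_length_le hspre hupre (le_of_lt hcase2)
  obtain ⟨a1, ha1⟩ := hsu
  have ha1ne : a1 ≠ [] := by
    intro h
    subst h
    simp at ha1
    subst ha1
    omega
  have hkey : a1 ++ v = a ++ t := by
    have : s ++ (a1 ++ v) = s ++ (a ++ t) := by
      rw [← List.append_assoc, ha1, ← hfac, ← hst]
      simp
    exact List.append_cancel_left this
  have ha1len : a1.length < a.length := by
    have := congrArg List.length ha1
    simp at this
    omega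
  have ha1a : a1 <+: a := by
    refine List.prefix_of_prefix_length_le ?_ (List.prefix_append a t) (le_of_lt ha1len)
    exact ⟨v, hkey⟩
  obtain ⟨a2, ha2⟩ := ha1a
  have ha2ne : a2 ≠ [] := by
    intro h
    subst h
    simp at ha2
    subst ha2
    omega
  have hveq : v = a2 ++ t := by
    have : a1 ++ v = a1 ++ (a2 ++ t) := by
      rw [hkey, ← ha2]
      simp
    exact List.append_cancel_left this
  -- a < a2, hence a < v
  have haa2 : List.Lex (· < ·) a a2 := haL.lex_suffix ha2.symm ha1ne ha2ne
  have hav : List.Lex (· < ·) a v := by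
    rw [hveq]
    exact List.Lex.append_right _ t haa2
  -- a ++ t is a proper nonempty suffix of w
  have hatsuf : a ++ t <:+ w := ⟨s, by simpa using hst⟩
  have hatne : a ++ t ≠ [] := by
    intro h
    simp at h
    exact haL.1 h.1
  have hatnw : a ++ t ≠ w := by
    intro h
    have h1 := congrArg List.length hst
    have h2 := congrArg List.length h
    simp at h1 h2
    have : s.length ≠ 0 := fun hh => hsne (List.length_eq_zero_iff.mp hh)
    omega
  rcases min_suffix hfac hu hvL hmax (a ++ t) hatsuf hatne hatnw with h | h
  · exact (show a <+: v from ⟨t, h⟩).isInfix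
  · by_cases hpv : a <+: v
    · exact hpv.isInfix
    · exact absurd h (fun h => lex_asymm h (lex_append_left_of_not_prefix hav hpv t))
end

section
/- Let (N, W) be a Lyndon pair with W finite, and let m be the maximal length of a word in W. Then N is finite if and only if every word in N has length at most m − 1. -/
/-- `N` is a set of Lyndon words containing every letter of the alphabet and
closed under taking Lyndon factors ("Lyndon atoms"). -/
def IsLyndonSystem {X : Type*} [LinearOrder X] (N : Set (List X)) : Prop :=
  (∀ w ∈ N, IsLyndon w) ∧ (∀ x : X, [x] ∈ N) ∧
    (∀ w ∈ N, ∀ u : List X, IsLyndon u → u <:+: w → u ∈ N)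

/-- The antichain `W(N)` of Lyndon words associated to `N`: Lyndon words not
in `N` all of whose proper Lyndon factors lie in `N`. -/
def WSet {X : Type*} [LinearOrder X] (N : Set (List X)) : Set (List X) :=
  {w | IsLyndon w ∧ w ∉ N ∧ ∀ u : List X, IsLyndon u → u <:+: w → u ≠ w → u ∈ N}

section Aux

variable {X : Type*} [LinearOrder X]

local notation "LL" => List.Lex (· < · : X → X → Prop)

theorem lexAsymm {a b : List X} (h : LL a b) (h' : LL b a) : False :=
  (List.Lex.asymm (· < ·)).asymm a b h h'

theorem lexTrans {a b c : List X} (h : LL a b) (h' : LL b c) : LL a c := by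
  exact List.lex_trans (fun h1 h2 => lt_trans h1 h2) h h'

theorem lexTricho (a b : List X) : LL a b ∨ a = b ∨ LL b a :=
  by
  by_cases h1 : LL a b
  · exact Or.inl h1
  by_cases h2 : LL b a
  · exact Or.inr (Or.inr h2)
  exact Or.inr (Or.inl ((List.Lex.trichotomous (· < ·)).trichotomous a b h1 h2))

theorem lex_append_left_iff {c a b : List X} : LL (c ++ a) (c ++ b) ↔ LL a b := by
  induction c with
  | nil => rfl
  | cons x c ih => simpa [List.lex_cons_iff] using ih

theorem lex_extract {a b : List X} (h : LL a b) :
    a <+: b ∨ ∃ c x y a' b', x < y ∧ a = c ++ x :: a' ∧ b = c ++ y :: b' := by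
  induction h with
  | nil => exact Or.inl (List.nil_prefix)
  | @rel x l₁ y l₂ hxy => exact Or.inr ⟨[], x, y, l₁, l₂, hxy, rfl, rfl⟩
  | @cons x l₁ l₂ h ih =>
    rcases ih with hp | ⟨c, u, v, a', b', huv, rfl, rfl⟩
    · obtain ⟨t, rfl⟩ := hp
      exact Or.inl ⟨t, rfl⟩
    · exact Or.inr ⟨x :: c, u, v, a', b', huv, rfl, rfl⟩

theorem lex_of_lt_head {x y : X} (h : x < y) (c a b : List X) :
    LL (c ++ x :: a) (c ++ y :: b) := by
  induction c with
  | nil => exact List.Lex.rel h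
  | cons z c ih => exact List.Lex.cons ih

theorem lex_of_prefix {a b : List X} (h : a <+: b) (hne : a ≠ b) : LL a b := by
  obtain ⟨c, rfl⟩ := h
  cases c with
  | nil => simp at hne
  | cons x c =>
    have : LL ([] : List X) (x :: c) := List.Lex.nil
    simpa using lex_append_left_iff.mpr this

theorem not_lex_of_prefix {a b : List X} (h : b <+: a) : ¬ LL a b := by
  intro hl
  rcases lex_extract hl with hp | ⟨c, x, y, a', b', hxy, rfl, rfl⟩
  · have := hp.eq_of_length (le_antisymm hp.length_le h.length_le)
    exact absurd (this ▸ hl) (fun hh => lexAsymm hh hh)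
  · obtain ⟨d, hd⟩ := h
    rw [List.append_assoc] at hd
    have h2 : y :: (b' ++ d) = x :: a' := List.append_cancel_left hd
    have : y = x := (List.cons.injEq _ _ _ _ ▸ h2).1
    exact absurd hxy (by simp [this])

theorem suffix_of_suffix_length_le {l₁ l₂ l₃ : List X} (h1 : l₁ <:+ l₃) (h2 : l₂ <:+ l₃)
    (h : l₁.length ≤ l₂.length) : l₁ <:+ l₂ :=
  List.reverse_prefix.mp
    (List.prefix_of_prefix_length_le (List.reverse_prefix.mpr h1)
      (List.reverse_prefix.mpr h2) (by simpa using h))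

theorem lyndon_lex_suffix {w a s : List X} (hw : IsLyndon w) (hsplit : w = a ++ s)
    (ha : a ≠ []) (hs : s ≠ []) : LL w s := by
  have hrot : LL w (s ++ a) := hw.2 a s ha hs hsplit
  have hlen : s.length < w.length := by
    rw [hsplit, List.length_append]
    have := List.length_pos_iff.mpr ha
    omega
  rcases lexTricho w s with h | h | h
  · exact h
  · exact absurd (congrArg List.length h) (by omega)
  · exfalso
    rcases lex_extract h with hp | ⟨c, x, y, s', w', hxy, hseq, hweq⟩
    · -- s is a prefix of w: border case
      obtain ⟨cc, hcc⟩ := hp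
      have hccne : cc ≠ [] := by
        rintro rfl
        rw [List.append_nil] at hcc
        exact absurd (congrArg List.length hcc) (by omega)
      have hrot2 : LL w (cc ++ s) := hw.2 s cc hs hccne hcc.symm
      have h3 : LL (s ++ cc) (s ++ a) := by rw [hcc]; exact hrot
      have h4 : LL cc a := lex_append_left_iff.mp h3
      rcases lex_extract h4 with hp4 | ⟨c, x, y, c', a', hxy, hcceq, haeq⟩
      · have hlcc : cc.length = a.length := by
          have e1 := congrArg List.length hcc
          have e2 := congrArg List.length hsplit
          simp [List.length_append] at e1 e2
          omega
        have : cc = a := hp4.eq_of_length hlcc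
        subst this
        exact lexAsymm h4 h4
      · have h5 : LL (cc ++ s) (a ++ s) := by
          rw [hcceq, haeq, List.append_assoc, List.append_assoc]
          exact lex_of_lt_head hxy c _ _
        rw [← hsplit] at h5
        exact lexAsymm hrot2 h5
    · have h5 : LL (s ++ a) w := by
        rw [hseq, hweq, List.append_assoc]
        exact lex_of_lt_head hxy c _ _
      exact lexAsymm hrot h5

theorem isLyndon_of_suffix {w : List X} (hne : w ≠ [])
    (H : ∀ a s : List X, a ≠ [] → s ≠ [] → w = a ++ s → LL w s) : IsLyndon w := by
  refine ⟨hne, fun a b ha hb hab => ?_⟩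
  have h := H a b ha hb hab
  rcases lex_extract h with hp | ⟨c, x, y, w', b', hxy, hweq, hbeq⟩
  · exfalso
    have h1 := hp.length_le
    have h2 := congrArg List.length hab
    simp [List.length_append] at h2
    have := List.length_pos_iff.mpr ha
    omega
  · rw [hweq, hbeq, List.append_assoc]
    exact lex_of_lt_head hxy c _ _

theorem lyndon_singleton (x : X) : IsLyndon [x] := by
  refine ⟨by simp, fun a b ha hb hab => ?_⟩
  exfalso
  have := congrArg List.length hab
  have h1 := List.length_pos_iff.mpr ha
  have h2 := List.length_pos_iff.mpr hb
  simp [List.length_append] at this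
  omega

theorem lyndon_append {u v : List X} (hu : IsLyndon u) (hv : IsLyndon v) (huv : LL u v) :
    IsLyndon (u ++ v) := by
  have hune := hu.1
  have hvne := hv.1
  have claim0 : LL (u ++ v) v := by
    rcases lex_extract huv with hp | ⟨c, x, y, u', v', hxy, hueq, hveq⟩
    · obtain ⟨v', rfl⟩ := hp
      have hv'ne : v' ≠ [] := by
        rintro rfl
        rw [List.append_nil] at huv
        exact lexAsymm huv huv
      exact lex_append_left_iff.mpr (lyndon_lex_suffix hv rfl hune hv'ne)
    · rw [hueq, hveq, List.append_assoc]
      exact lex_of_lt_head hxy c _ _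
  apply isLyndon_of_suffix (by simp [hune])
  intro a s ha hs hsplit
  by_cases hlen : s.length ≤ v.length
  · have hsuf : s <:+ v :=
      suffix_of_suffix_length_le ⟨a, hsplit.symm⟩ (List.suffix_append u v) hlen
    obtain ⟨a', rfl⟩ := hsuf
    by_cases ha' : a' = []
    · subst ha'
      exact claim0
    · exact lexTrans claim0 (lyndon_lex_suffix hv rfl ha' hs)
  · push_neg at hlen
    have hlab := congrArg List.length hsplit
    simp [List.length_append] at hlab
    have halen : a.length < u.length := by omega
    have hseq : s = u.drop a.length ++ v := by
      have h0 := congrArg (List.drop a.length) hsplit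
      rw [List.drop_append, List.drop_append] at h0
      simp at h0
      have e1 : a.length - u.length = 0 := by omega
      rw [e1, List.drop_zero] at h0
      exact h0.symm
    have husplit : u = a ++ u.drop a.length := by
      have h0 : u ++ v = (a ++ u.drop a.length) ++ v := by
        rw [hsplit, hseq, List.append_assoc]
      exact List.append_cancel_right h0
    have hs1ne : u.drop a.length ≠ [] := by
      intro h0
      have := congrArg List.length h0
      simp at this
      omega
    have h1 : LL u (u.drop a.length) := lyndon_lex_suffix hu husplit ha hs1ne
    rcases lex_extract h1 with hp | ⟨c, x, y, u', s', hxy, hueq, hseq2⟩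
    · exfalso
      have h6 := hp.length_le
      have h7 : (List.drop a.length u).length = u.length - a.length := List.length_drop
      have h8 := List.length_pos_iff.mpr ha
      omega
    · rw [hseq, hseq2, hueq]
      simp only [List.append_assoc, List.cons_append]
      exact lex_of_lt_head hxy c _ _

theorem exists_W_factor {N : Set (List X)} (hN : IsLyndonSystem N) :
    ∀ n, ∀ w : List X, w.length ≤ n → IsLyndon w → w ∉ N → ∃ t ∈ WSet N, t <:+: w := by
  intro n
  induction n with
  | zero =>
    intro w hlen hw hwN
    exact absurd (List.length_eq_zero_iff.mp (Nat.le_zero.mp hlen)) hw.1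
  | succ n ih =>
    intro w hlen hw hwN
    by_cases hall : ∀ u : List X, IsLyndon u → u <:+: w → u ≠ w → u ∈ N
    · exact ⟨w, ⟨hw, hwN, hall⟩, List.infix_rfl⟩
    · push_neg at hall
      obtain ⟨v, hvL, hvw, hvne, hvN⟩ := hall
      have hvlen : v.length ≤ n := by
        have h1 := hvw.length_le
        have h2 : v.length ≠ w.length := fun h => hvne (hvw.eq_of_length h)
        omega
      obtain ⟨t, htW, htv⟩ := ih v hvlen hvL hvN
      exact ⟨t, htW, htv.trans hvw⟩

theorem key_step {N : Set (List X)} (hN : IsLyndonSystem N) {m : ℕ}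
    (hm : ∀ w ∈ WSet N, w.length ≤ m)
    {u : List X} (huN : u ∈ N) (hmu : m ≤ u.length) (h2 : 2 ≤ u.length) :
    ∃ u', u' ∈ N ∧ u.length < u'.length := by
  classical
  have hu : IsLyndon u := hN.1 u huN
  set S : Set (List X) := {s | s <:+ u ∧ s ≠ [] ∧ s ≠ u} with hS
  have hSfin : S.Finite :=
    (u.tails).finite_toSet.subset (fun s hs => (List.mem_tails _ _).mpr hs.1)
  have hSne : S.Nonempty := by
    refine ⟨u.drop 1, List.drop_suffix 1 u, ?_, ?_⟩
    · intro h
      have := congrArg List.length h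
      simp at this
      omega
    · intro h
      have := congrArg List.length h
      simp at this
      omega
  obtain ⟨u₂, hu₂S, hmin0⟩ := Set.exists_min_image S id hSfin hSne
  obtain ⟨hu₂suf, hu₂ne, hu₂neu⟩ := hu₂S
  have hmin : ∀ s ∈ S, u₂ = s ∨ LL u₂ s := by
    intro s hsS
    rcases (hmin0 s hsS).lt_or_eq with h | h
    · exact Or.inr h
    · exact Or.inl h
  have hu₂len : u₂.length < u.length := by
    have h1 := hu₂suf.length_le
    rcases lt_or_eq_of_le h1 with h | h
    · exact h
    · exact absurd (hu₂suf.eq_of_length h) hu₂neu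
  -- u₂ is Lyndon
  have hu₂L : IsLyndon u₂ := by
    apply isLyndon_of_suffix hu₂ne
    intro a s ha hs hsplit
    have hsS : s ∈ S := by
      refine ⟨List.IsSuffix.trans (show s <:+ u₂ from ⟨a, hsplit.symm⟩) hu₂suf, hs, ?_⟩
      intro h
      have h1 := congrArg List.length hsplit
      have h2 := congrArg List.length h
      have h3 := List.length_pos_iff.mpr ha
      simp [List.length_append] at h1
      omega
    rcases hmin s hsS with h | h
    · exfalso
      have h1 := congrArg List.length hsplit
      have h2 := congrArg List.length h
      have h3 := List.length_pos_iff.mpr ha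
      simp [List.length_append] at h1
      omega
    · exact h
  -- u < u₂
  obtain ⟨a0, ha0⟩ := hu₂suf
  have ha0ne : a0 ≠ [] := by
    rintro rfl
    exact hu₂neu (by simpa using ha0)
  have huu₂ : LL u u₂ := lyndon_lex_suffix hu ha0.symm ha0ne hu₂ne
  have hvL : IsLyndon (u ++ u₂) := lyndon_append hu hu₂L huu₂
  refine ⟨u ++ u₂, ?_, by
    have := List.length_pos_iff.mpr hu₂ne
    simp only [List.length_append]
    omega⟩
  by_contra hvN
  obtain ⟨t, htW, htinf⟩ := exists_W_factor hN (u ++ u₂).length _ le_rfl hvL hvN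
  have htlen : t.length ≤ m := hm t htW
  obtain ⟨htL, htN, -⟩ := htW
  have htpos : 0 < t.length := List.length_pos_iff.mpr htL.1
  have htnotu : ¬ t <:+: u := fun h => htN (hN.2.2 u huN t htL h)
  obtain ⟨x, y, hxy⟩ := htinf
  have hlenxy : x.length + t.length + y.length = u.length + u₂.length := by
    have := congrArg List.length hxy
    simp only [List.length_append] at this
    omega
  by_cases hc1 : x.length + t.length ≤ u.length
  · -- t is a factor of u
    apply htnotu
    have h1 : x ++ t <+: u ++ u₂ := ⟨y, by rw [← hxy]⟩
    have hpre : x ++ t <+: u :=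
      List.prefix_of_prefix_length_le h1 (List.prefix_append u u₂)
        (by simp only [List.length_append]; omega)
    obtain ⟨z, hz⟩ := hpre
    exact ⟨x, z, by rw [← hz]⟩
  · by_cases hc2 : u.length ≤ x.length
    · -- t is a factor of u₂, hence of u
      apply htnotu
      have h1 : t ++ y <:+ u ++ u₂ := ⟨x, by rw [← hxy]; simp [List.append_assoc]⟩
      have h2 : t ++ y <:+ u₂ :=
        suffix_of_suffix_length_le h1 (List.suffix_append u u₂)
          (by simp only [List.length_append]; omega)
      obtain ⟨z, hz⟩ := h2
      exact List.IsInfix.trans (show t <:+: u₂ from ⟨z, y, by rw [List.append_assoc]; exact hz⟩)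
        (show u₂ <:+: u from ⟨a0, [], by simp [ha0]⟩)
    · push_neg at hc1 hc2
      set n := x.length + t.length - u.length with hn
      have hxpos : 0 < x.length := by omega
      have hnpos : 0 < n := by omega
      have hnle : n ≤ u₂.length := by omega
      set s := u.drop x.length with hsdef
      set p := u₂.take n with hpdef
      have hslen : s.length = u.length - x.length := List.length_drop
      have hsne : s ≠ [] := by
        intro h
        have := congrArg List.length h
        rw [hslen] at this
        simp at this
        omega
      have hsneu : s ≠ u := by
        intro h
        have := congrArg List.length h
        rw [hslen] at this
        omega
      have hplen : p.length = n := by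
        rw [hpdef, List.length_take]
        omega
      have hpne : p ≠ [] := by
        intro h
        rw [h] at hplen
        simp at hplen
        omega
      have hppre : p <+: u₂ := List.take_prefix n u₂
      -- t = s ++ p
      have hteq : t = s ++ p := by
        have e1 : t = List.take t.length (List.drop x.length (x ++ t ++ y)) := by
          rw [List.append_assoc, List.drop_left, List.take_left]
        rw [hxy] at e1
        rw [List.drop_append] at e1
        have e2 : x.length - u.length = 0 := by omega
        rw [e2, List.drop_zero] at e1
        rw [List.take_append] at e1
        rw [List.take_of_length_le (by rw [hslen]; omega)] at e1
        have e3 : t.length - s.length = n := by rw [hslen]; omega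
        rw [e3] at e1
        exact e1
      have hsS : s ∈ S := ⟨List.drop_suffix _ u, hsne, hsneu⟩
      have hrot : LL t (p ++ s) := htL.2 s p hsne hpne hteq
      have hkill : p <+: s → False := by
        intro hps
        have hpt : p <+: t := by
          rw [hteq]
          exact hps.trans (List.prefix_append s p)
        exact not_lex_of_prefix hpt (lyndon_lex_suffix htL hteq hsne hpne)
      rcases hmin s hsS with heq | hlex
      · exact hkill (heq ▸ hppre)
      · rcases lex_extract hlex with hp2 | ⟨c, a, b, u₂', s', hab, hu₂eq, hseq⟩
        · exact hkill (hppre.trans hp2)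
        · by_cases hcl : p.length ≤ c.length
          · have hcpre : c <+: u₂ := ⟨a :: u₂', hu₂eq.symm⟩
            have h8 : p <+: c := List.prefix_of_prefix_length_le hppre hcpre hcl
            exact hkill (h8.trans ⟨b :: s', hseq.symm⟩)
          · push_neg at hcl
            have hpeq : p = c ++ a :: (u₂'.take (n - c.length - 1)) := by
              rw [hpdef, hu₂eq, List.take_append]
              rw [List.take_of_length_le (by omega)]
              have e4 : n - c.length = (n - c.length - 1) + 1 := by omega
              rw [e4, List.take_succ_cons]
              simp
            have h5 : LL (p ++ s) (s ++ p) := by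
              rw [hpeq, hseq]
              simp only [List.append_assoc, List.cons_append]
              exact lex_of_lt_head hab c _ _
            rw [← hteq] at h5
            exact lexAsymm hrot h5

end Aux

theorem stmt13 {X : Type*} [LinearOrder X] [Finite X]
    (N : Set (List X)) (hN : IsLyndonSystem N)
    (hWfin : (WSet N).Finite) (m : ℕ)
    (hm : ∀ w ∈ WSet N, w.length ≤ m) (hm' : ∃ w ∈ WSet N, w.length = m) :
    N.Finite ↔ ∀ l ∈ N, l.length ≤ m - 1 := by
  obtain ⟨w0, hw0W, hw0len⟩ := hm'
  have hm2 : 2 ≤ m := by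
    obtain ⟨hL, hnN, -⟩ := hw0W
    have h1 : w0 ≠ [] := hL.1
    have h2 : w0.length ≠ 1 := by
      intro h
      obtain ⟨x, rfl⟩ := List.length_eq_one_iff.mp h
      exact hnN (hN.2.1 x)
    have h3 : 0 < w0.length := List.length_pos_iff.mpr h1
    omega
  constructor
  · intro hfin
    by_contra hbad
    push_neg at hbad
    obtain ⟨l, hlN, hlong⟩ := hbad
    have hml : m ≤ l.length := by omega
    let T := {v : List X // v ∈ N ∧ m ≤ v.length}
    have step : ∀ v : T, ∃ v' : T, v.1.length < v'.1.length := by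
      rintro ⟨v, hvN, hvm⟩
      obtain ⟨v', hv'N, hlt⟩ := key_step hN hm hvN hvm (le_trans hm2 hvm)
      exact ⟨⟨v', hv'N, le_trans hvm (le_of_lt hlt)⟩, hlt⟩
    choose F hF using step
    let f : ℕ → T := fun n => F^[n] ⟨l, hlN, hml⟩
    have hmono : StrictMono fun n => (f n).1.length := by
      apply strictMono_nat_of_lt_succ
      intro n
      have he : f (n + 1) = F (f n) := Function.iterate_succ_apply' F n _
      simp only [he]
      exact hF (f n)
    have hinj : Function.Injective fun n => (f n).1 := by
      intro a b hab
      exact hmono.injective (congrArg List.length hab)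
    exact Set.infinite_of_injective_forall_mem hinj (fun n => (f n).2.1) hfin
  · intro hbound
    exact (List.finite_length_le X (m - 1)).subset (fun l hl => hbound l hl)
end

section
/- Over the two-letter alphabet X = {x < y}, for each integer d ≥ 2, the set N = {x, xy, xy², …, xy^{d−2}, y} of d Lyndon words is closed under taking Lyndon factors and contains X, and its associated antichain is W(N) = { xy^i · xy^{i+1} : 0 ≤ i ≤ d−3 } ∪ { xy^{d−1} }, which has exactly d − 1 elements. -/
open List Function

theorem suffix_replicate_append {α : Type*} {y : α} {v l : List α} :
    ∀ {n : ℕ}, v <:+ replicate n y ++ l → v <:+ l ∨ ∃ v', v = y :: v'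
  | 0, h => Or.inl (by simpa using h)
  | n + 1, h => by
    rw [replicate_succ, cons_append, suffix_cons_iff] at h
    rcases h with rfl | h
    · exact Or.inr ⟨_, rfl⟩
    · exact suffix_replicate_append h

theorem exists_eq_replicate_append {α : Type*} {x y : α} (hX : ∀ z : α, z = x ∨ z = y) :
    ∀ s : List α, ∃ k r, s = replicate k y ++ r ∧ (r = [] ∨ ∃ t, r = x :: t)
  | [] => ⟨0, [], rfl, Or.inl rfl⟩
  | c :: s => by
    obtain ⟨k, r, rfl, hr⟩ := exists_eq_replicate_append hX s
    rcases hX c with rfl | rfl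
    · exact ⟨0, _, rfl, Or.inr ⟨_, rfl⟩⟩
    · exact ⟨k + 1, r, rfl, hr⟩

section Words

variable {X : Type*} [LinearOrder X] {x y : X}

theorem not_cons_lt_append_singleton :
    ∀ {t : List X}, (∀ c ∈ t, c ≤ y) → ¬ Lex (· < ·) (y :: t) (t ++ [y])
  | [], _ => lex_irrefl (lt_irrefl ·) _
  | c :: t, ht => by
    rw [cons_append, cons_lex_cons_iff]
    rintro (hc | ⟨rfl, h⟩)
    · exact (ht c mem_cons_self).not_gt hc
    · exact not_cons_lt_append_singleton (fun c hc => ht c (mem_cons_of_mem _ hc)) h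

theorem IsLyndon.eq_nil_of_forall_le {t : List X} (hw : IsLyndon (y :: t))
    (ht : ∀ c ∈ t, c ≤ y) : t = [] := by
  by_contra hne
  exact not_cons_lt_append_singleton ht (hw.2 [y] t (cons_ne_nil _ _) hne rfl)

theorem IsLyndon.eq_singleton_of_eq_replicate {u : List X} {n : ℕ} (hu : IsLyndon u)
    (h : u = replicate n y) : u = [y] := by
  subst h
  obtain _ | n := n
  · exact absurd rfl hu.1
  · rw [replicate_succ] at hu ⊢
    rw [hu.eq_nil_of_forall_le fun c hc => (eq_of_mem_replicate hc).le]

theorem isLyndon_singleton (z : X) : IsLyndon [z] :=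
  ⟨cons_ne_nil _ _, fun a b ha hb hab => by
    obtain ⟨c, a, rfl⟩ := exists_cons_of_ne_nil ha
    simp_all⟩

theorem isLyndon_cons_of_forall_lt {t : List X} (ht : ∀ c ∈ t, x < c) : IsLyndon (x :: t) := by
  refine ⟨cons_ne_nil _ _, fun a b ha hb hab => ?_⟩
  obtain ⟨c, b, rfl⟩ := exists_cons_of_ne_nil hb
  obtain ⟨x', a, rfl⟩ := exists_cons_of_ne_nil ha
  obtain ⟨rfl, rfl⟩ := cons_eq_cons.1 hab
  exact Lex.rel (ht c (by simp))

theorem isLyndon_cons_replicate (hxy : x < y) (i : ℕ) : IsLyndon (x :: replicate i y) :=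
  isLyndon_cons_of_forall_lt fun _ hc => eq_of_mem_replicate hc ▸ hxy

theorem cons_replicate_append_lt (hxy : x < y) {k a : ℕ} (h : k < a) (u v : List X) :
    Lex (· < ·) (x :: replicate k y ++ x :: u) (x :: replicate a y ++ v) := by
  obtain ⟨c, rfl⟩ := Nat.exists_eq_add_of_lt h
  have : x :: replicate (k + c + 1) y ++ v = x :: replicate k y ++ y :: (replicate c y ++ v) := by
    rw [Nat.add_assoc, replicate_add, replicate_succ]; simp
  rw [this]
  exact append_left_lt (Lex.rel hxy)

theorem isLyndon_pair (hxy : x < y) {a b : ℕ} (hab : a < b) :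
    IsLyndon (x :: replicate a y ++ x :: replicate b y) := by
  refine ⟨by simp, fun u v hu hv huv => ?_⟩
  have hvs : v <:+ x :: (replicate a y ++ x :: replicate b y) := ⟨u, huv.symm⟩
  rcases suffix_cons_iff.1 hvs with hvw | hvs
  · subst hvw
    exact absurd (by simpa using huv) hu
  rcases suffix_replicate_append hvs with hvs | ⟨v, rfl⟩
  · rcases suffix_cons_iff.1 hvs with rfl | hvs
    · obtain rfl : u = x :: replicate a y := append_cancel_right huv.symm
      exact cons_replicate_append_lt hxy hab _ _
    · rcases suffix_replicate_append (l := []) (by simpa using hvs) with hvs | ⟨v, rfl⟩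
      · exact absurd (suffix_nil.1 hvs) hv
      · exact Lex.rel hxy
  · exact Lex.rel hxy

theorem not_isLyndon_pair (hxy : x < y) {a b : ℕ} (hba : b ≤ a) :
    ¬ IsLyndon (x :: replicate a y ++ x :: replicate b y) := fun h => by
  have hlt := h.2 _ _ (cons_ne_nil _ _) (cons_ne_nil _ _) rfl
  rcases hba.lt_or_eq with hba | rfl
  · exact List.lt_asymm hlt (cons_replicate_append_lt hxy hba _ _)
  · exact List.lt_irrefl _ hlt

theorem IsLyndon.eq_of_infix_cons_replicate {u : List X} {m : ℕ} (hu : IsLyndon u)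
    (h : u <:+: x :: replicate m y) : u = [y] ∨ ∃ l ≤ m, u = x :: replicate l y := by
  rcases infix_cons_iff.1 h with h | h
  · rcases prefix_cons_iff.1 h with rfl | ⟨t, rfl, ht⟩
    · exact absurd rfl hu.1
    · obtain ⟨l, hl, rfl⟩ := sublist_replicate_iff.1 ht.sublist
      exact Or.inr ⟨l, hl, rfl⟩
  · obtain ⟨l, -, rfl⟩ := sublist_replicate_iff.1 h.sublist
    exact Or.inl (hu.eq_singleton_of_eq_replicate rfl)

theorem IsLyndon.eq_of_infix_pair (hxy : x < y) {u : List X} {i : ℕ} (hu : IsLyndon u)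
    (h : u <:+: x :: replicate i y ++ x :: replicate (i + 1) y)
    (hne : u ≠ x :: replicate i y ++ x :: replicate (i + 1) y) :
    u = [y] ∨ ∃ l ≤ i + 1, u = x :: replicate l y := by
  rcases infix_append_iff_ne_nil.1 h with h | h | ⟨l₁, l₂, hl₁, hl₂, rfl, h₁, h₂⟩
  · obtain h | ⟨l, hl, rfl⟩ := hu.eq_of_infix_cons_replicate h
    exacts [Or.inl h, Or.inr ⟨l, by omega, rfl⟩]
  · exact hu.eq_of_infix_cons_replicate h
  rcases suffix_cons_iff.1 h₁ with rfl | h₁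
  · rcases prefix_cons_iff.1 h₂ with rfl | ⟨t, rfl, ht⟩
    · exact absurd rfl hl₂
    obtain ⟨l, hl, rfl⟩ := sublist_replicate_iff.1 ht.sublist
    obtain rfl : l = i + 1 := le_antisymm hl (not_le.1 fun h => not_isLyndon_pair hxy h hu)
    exact absurd rfl hne
  · obtain ⟨_ | n, -, rfl⟩ := sublist_replicate_iff.1 h₁.sublist
    · exact absurd rfl hl₁
    left
    rw [replicate_succ, cons_append] at hu ⊢
    rw [hu.eq_nil_of_forall_le]
    intro c hc
    rcases mem_append.1 hc with hc | hc
    · exact (eq_of_mem_replicate hc).le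
    · rcases mem_cons.1 (h₂.subset hc) with rfl | hc
      exacts [hxy.le, (eq_of_mem_replicate hc).le]

/- `R` commutes with the block `p = xy^a`, so it is a power of `p`: the word is scanned one
block at a time until a block `xy^b` with `b ≠ a` follows. -/
theorem IsLyndon.exists_pair_infix_of_commute (hX : ∀ z : X, z = x ∨ z = y) (hxy : x < y)
    {w : List X} (hw : IsLyndon w) {a : ℕ} {R : List X}
    (hR : R ++ x :: replicate a y = x :: replicate a y ++ R) (s : List X)
    (h : w = x :: replicate a y ++ R ++ x :: s) :
    ∃ b, a < b ∧ x :: replicate a y ++ x :: replicate b y <:+: w := by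
  obtain ⟨k, r, rfl, hr⟩ := exists_eq_replicate_append hX s
  rcases lt_trichotomy k a with hka | rfl | hak
  · obtain ⟨r', hr'⟩ : ∃ r', r ++ (x :: replicate a y ++ R) = x :: r' := by
      rcases hr with rfl | ⟨t, rfl⟩ <;> exact ⟨_, rfl⟩
    have hrot := hw.2 _ _ (by simp) (cons_ne_nil _ _) h
    have e : x :: (replicate k y ++ r) ++ (x :: replicate a y ++ R) =
        x :: replicate k y ++ x :: r' := by
      rw [← hr']; simp
    rw [e, h, append_assoc] at hrot
    exact (List.lt_asymm hrot (cons_replicate_append_lt hxy hka r' _)).elim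
  · rcases hr with rfl | ⟨t, rfl⟩
    · rw [append_nil] at h
      have hrot := hw.2 (x :: replicate k y) (R ++ x :: replicate k y) (cons_ne_nil _ _)
        (by simp) (by rw [h, append_assoc])
      rw [hR, ← h] at hrot
      exact absurd hrot (List.lt_irrefl _)
    · exact hw.exists_pair_infix_of_commute hX hxy (R := R ++ x :: replicate k y)
        (by rw [hR, append_assoc, hR]) t (by simpa using h)
  · refine ⟨k, hak, R, r, ?_⟩
    rw [h, ← hR]
    simp only [append_assoc, cons_append]
termination_by s.length
decreasing_by subst_vars; simp; omega

theorem IsLyndon.exists_pair_infix (hX : ∀ z : X, z = x ∨ z = y) (hxy : x < y)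
    {w : List X} (hw : IsLyndon w) {a : ℕ} {s : List X}
    (h : w = x :: replicate a y ++ x :: s) :
    ∃ b, a < b ∧ x :: replicate a y ++ x :: replicate b y <:+: w :=
  hw.exists_pair_infix_of_commute hX hxy (R := []) (by simp) s (by simpa using h)

end Words

def runSystem {X : Type*} (x y : X) (d : ℕ) : Set (List X) :=
  {w | ∃ i : ℕ, i + 2 ≤ d ∧ w = x :: replicate i y} ∪ {[y]}

def runAntichain {X : Type*} (x y : X) (d : ℕ) : Set (List X) :=
  {w | ∃ i : ℕ, i + 3 ≤ d ∧ w = x :: replicate i y ++ x :: replicate (i + 1) y} ∪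
    {x :: replicate (d - 1) y}

theorem ncard_setOf_exists_union_singleton {α : Type*} {f : ℕ → α} (hf : Injective f) {b : α}
    (hb : ∀ i, f i ≠ b) (k d : ℕ) :
    ({w | ∃ i, i + k ≤ d ∧ w = f i} ∪ {b}).ncard = d + 1 - k + 1 := by
  have hA : {w | ∃ i, i + k ≤ d ∧ w = f i} = f '' Set.Iio (d + 1 - k) := by
    ext w
    simp only [Set.mem_ofPred_eq, Set.mem_image, Set.mem_Iio]
    constructor <;> rintro ⟨i, hi, rfl⟩ <;> exact ⟨i, by omega, rfl⟩
  rw [hA, Set.union_singleton, Set.ncard_insert_of_notMem (by rintro ⟨i, -, hi⟩; exact hb i hi)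
    ((Set.finite_Iio _).image f), Set.ncard_image_of_injective _ hf, Set.ncard_Iio_nat]

theorem eq_of_infix_of_mem_WSet {X : Type*} [LinearOrder X] {N : Set (List X)} {w u : List X}
    (hw : w ∈ WSet N) (hu : IsLyndon u) (huw : u <:+: w) (huN : u ∉ N) : u = w :=
  by_contra fun h => huN (hw.2.2 u hu huw h)

section RunSystem

variable {X : Type*} {x y : X} {d : ℕ}

theorem cons_replicate_mem_runSystem (hxy : x ≠ y) {i : ℕ} :
    x :: replicate i y ∈ runSystem x y d ↔ i + 2 ≤ d := by
  simp [runSystem, hxy]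

theorem pair_ne_cons_replicate (hxy : x ≠ y) {a b i : ℕ} :
    x :: replicate a y ++ x :: replicate b y ≠ x :: replicate i y := fun h =>
  hxy (eq_of_mem_replicate (by rw [← (cons_eq_cons.1 h).2]; simp))

theorem pair_not_mem_runSystem (hxy : x ≠ y) {a b : ℕ} :
    x :: replicate a y ++ x :: replicate b y ∉ runSystem x y d := by
  rintro (⟨i, -, h⟩ | h)
  · exact pair_ne_cons_replicate hxy h
  · simp at h

theorem ncard_runSystem (hxy : x ≠ y) (hd : 2 ≤ d) : (runSystem x y d).ncard = d := by
  have hf : Injective fun i => x :: replicate i y := fun a b h => by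
    simpa using congrArg length h
  rw [runSystem, ncard_setOf_exists_union_singleton hf fun i => by simp [hxy]]
  omega

theorem ncard_runAntichain (hxy : x ≠ y) (hd : 2 ≤ d) : (runAntichain x y d).ncard = d - 1 := by
  have hf : Injective fun i => x :: replicate i y ++ x :: replicate (i + 1) y := fun a b h => by
    have := congrArg length h
    simp at this
    omega
  rw [runAntichain, ncard_setOf_exists_union_singleton hf fun i => pair_ne_cons_replicate hxy]
  omega

variable [LinearOrder X]

theorem isLyndonSystem_runSystem (hxy : x < y) (hX : ∀ z : X, z = x ∨ z = y) (hd : 2 ≤ d) :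
    IsLyndonSystem (runSystem x y d) := by
  refine ⟨?_, fun z => ?_, ?_⟩
  · rintro w (⟨i, -, rfl⟩ | rfl)
    exacts [isLyndon_cons_replicate hxy i, isLyndon_singleton y]
  · rcases hX z with rfl | rfl
    exacts [Or.inl ⟨0, hd, rfl⟩, Or.inr rfl]
  · rintro w (⟨i, hi, rfl⟩ | rfl) u hu huw
    · rcases hu.eq_of_infix_cons_replicate huw with rfl | ⟨l, hl, rfl⟩
      exacts [Or.inr rfl, Or.inl ⟨l, by omega, rfl⟩]
    · exact Or.inr (((infix_singleton_iff u y).1 huw).resolve_left hu.1)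

theorem eq_of_cons_replicate_mem_WSet (hxy : x < y) {k : ℕ}
    (hw : x :: replicate k y ∈ WSet (runSystem x y d)) : k = d - 1 := by
  have hk : d ≤ k + 1 := by
    by_contra h
    exact hw.2.1 ((cons_replicate_mem_runSystem hxy.ne).2 (by omega))
  have hpre : x :: replicate (d - 1) y <+: x :: replicate k y :=
    (prefix_cons_inj x).2 (prefix_replicate_iff.2 ⟨by simp; omega, by simp⟩)
  have := eq_of_infix_of_mem_WSet hw (isLyndon_cons_replicate hxy _) hpre.isInfix
    (by rw [cons_replicate_mem_runSystem hxy.ne]; omega)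
  simpa using (congrArg length this).symm

theorem eq_pair_of_mem_WSet (hxy : x < y) (hX : ∀ z : X, z = x ∨ z = y) {k : ℕ} {s : List X}
    (hw : x :: replicate k y ++ x :: s ∈ WSet (runSystem x y d)) :
    k + 3 ≤ d ∧
      x :: replicate k y ++ x :: s = x :: replicate k y ++ x :: replicate (k + 1) y := by
  obtain ⟨b, hkb, hinf⟩ := hw.1.exists_pair_infix hX hxy rfl
  have hpair := eq_of_infix_of_mem_WSet hw (isLyndon_pair hxy hkb) hinf
    (pair_not_mem_runSystem hxy.ne)
  rw [← hpair] at hw ⊢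
  have hb : b + 2 ≤ d := (cons_replicate_mem_runSystem hxy.ne).1 <|
    hw.2.2 _ (isLyndon_cons_replicate hxy b) (suffix_append _ _).isInfix fun h => by
      have := congrArg length h
      simp at this
      omega
  obtain rfl : b = k + 1 := by
    by_contra hne
    have hpre : x :: replicate k y ++ x :: replicate (k + 1) y <+:
        x :: replicate k y ++ x :: replicate b y :=
      (prefix_append_right_inj _).2 <|
        (prefix_cons_inj x).2 (prefix_replicate_iff.2 ⟨by simp; omega, by simp⟩)
    have := eq_of_infix_of_mem_WSet hw (isLyndon_pair hxy k.lt_succ_self) hpre.isInfix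
      (pair_not_mem_runSystem hxy.ne)
    have := congrArg length this
    simp at this
    omega
  exact ⟨by omega, rfl⟩

theorem WSet_runSystem_subset (hxy : x < y) (hX : ∀ z : X, z = x ∨ z = y) :
    WSet (runSystem x y d) ⊆ runAntichain x y d := by
  intro w hw
  obtain ⟨c, t, rfl⟩ := exists_cons_of_ne_nil hw.1.1
  rcases hX c with rfl | rfl
  · obtain ⟨k, r, rfl, rfl | ⟨s, rfl⟩⟩ := exists_eq_replicate_append hX t
    · rw [append_nil] at hw ⊢
      exact Or.inr (eq_of_cons_replicate_mem_WSet hxy hw ▸ rfl)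
    · exact Or.inl ⟨k, eq_pair_of_mem_WSet hxy hX hw⟩
  · have hy : ∀ z : X, z ≤ c := fun z => (hX z).elim (· ▸ hxy.le) (· ▸ le_rfl)
    rw [hw.1.eq_nil_of_forall_le fun z _ => hy z] at hw
    exact absurd (Or.inr rfl) hw.2.1

theorem runAntichain_subset_WSet (hxy : x < y) (hd : 2 ≤ d) :
    runAntichain x y d ⊆ WSet (runSystem x y d) := by
  rintro w (⟨i, hi, rfl⟩ | rfl)
  · refine ⟨isLyndon_pair hxy i.lt_succ_self, pair_not_mem_runSystem hxy.ne,
      fun u hu huw hne => ?_⟩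
    rcases hu.eq_of_infix_pair hxy huw hne with rfl | ⟨l, hl, rfl⟩
    exacts [Or.inr rfl, Or.inl ⟨l, by omega, rfl⟩]
  · refine ⟨isLyndon_cons_replicate hxy _, fun h => by
      rw [cons_replicate_mem_runSystem hxy.ne] at h; omega, fun u hu huw hne => ?_⟩
    rcases hu.eq_of_infix_cons_replicate huw with rfl | ⟨l, hl, rfl⟩
    · exact Or.inr rfl
    · refine Or.inl ⟨l, ?_, rfl⟩
      have : l ≠ d - 1 := by rintro rfl; exact hne rfl
      omega

end RunSystem

theorem stmt14 {X : Type*} [LinearOrder X] (x y : X) (hxy : x < y)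
    (hX : ∀ z : X, z = x ∨ z = y) (d : ℕ) (hd : 2 ≤ d) (N : Set (List X))
    (hN : N = {w : List X | ∃ i : ℕ, i + 2 ≤ d ∧ w = x :: List.replicate i y} ∪ {[y]}) :
    IsLyndonSystem N ∧ N.ncard = d ∧
    WSet N = {w : List X | ∃ i : ℕ, i + 3 ≤ d ∧
        w = (x :: List.replicate i y) ++ (x :: List.replicate (i + 1) y)} ∪
      {x :: List.replicate (d - 1) y} ∧
    (WSet N).ncard = d - 1 := by
  obtain rfl : N = runSystem x y d := hN
  have hW : WSet (runSystem x y d) = runAntichain x y d :=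
    (WSet_runSystem_subset hxy hX).antisymm (runAntichain_subset_WSet hxy hd)
  exact ⟨isLyndonSystem_runSystem hxy hX hd, ncard_runSystem hxy.ne hd, hW,
    hW ▸ ncard_runAntichain hxy.ne hd⟩
end
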